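/- Let C = {x ∈ R_max^d | A·x ≤ B·x} be a tropical cone and g ∈ C with all coordinates finite. Then g is extreme of type t in C if and only if the all-zeros vector 𝟙 is extreme of type t in the tangent cone T(g,C). -/

import Mathlib

open scoped Classical

noncomputable section

/-- The max-plus semiring `ℝ ∪ {-∞}`: addition is `max` (the lattice `⊔`),
multiplication is `+` (with `⊥ + x = ⊥`). -/
abbrev Rmax := WithBot ℝ

/-- Tropical "dot product" `a·x = max_i (a_i + x_i)`. -/
def dotp {d : ℕ} (a x : Fin d → Rmax) : Rmax := Finset.univ.sup fun i => a i + x i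

/-- A tropical (polyhedral) cone: closed under coordinatewise max and
tropical scalar multiplication (adding a scalar to every coordinate). -/
def IsTropCone {d : ℕ} (C : Set (Fin d → Rmax)) : Prop :=
  (∀ x ∈ C, ∀ y ∈ C, x ⊔ y ∈ C) ∧ (∀ x ∈ C, ∀ lam : Rmax, (fun i => lam + x i) ∈ C)

/-- `g` is extreme in `C`: `g ∈ C` and `g = v ⊔ w` with `v, w ∈ C` forces `g = v` or `g = w`. -/
def TropExtreme {ι : Type*} (C : Set (ι → Rmax)) (g : ι → Rmax) : Prop :=
  g ∈ C ∧ ∀ v ∈ C, ∀ w ∈ C, g = v ⊔ w → g = v ∨ g = w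

/-- `g` is extreme of type `t` in `C`: `g` is minimal in `{x ∈ C | x t = g t}`. -/
def ExtremeType {ι : Type*} (C : Set (ι → Rmax)) (g : ι → Rmax) (t : ι) : Prop :=
  g ∈ C ∧ ∀ x ∈ C, x ≤ g → x t = g t → x = g

/-- The tropical cone defined by the system of inequalities `A·x ≤ B·x`. -/
def coneOf {d n : ℕ} (A B : Fin n → Fin d → Rmax) : Set (Fin d → Rmax) :=
  { x | ∀ k, dotp (A k) x ≤ dotp (B k) x }

/-- `argmax(c·g) = {i | c_i + g_i = c·g}`. -/
def argmaxSet {d : ℕ} (c g : Fin d → Rmax) : Finset (Fin d) :=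
  Finset.univ.filter fun i => c i + g i = dotp c g

/-- The tangent cone of `{x | A·x ≤ B·x}` at `g`. -/
def tangentCone {d n : ℕ} (A B : Fin n → Fin d → Rmax) (g : Fin d → Rmax) :
    Set (Fin d → Rmax) :=
  { x | ∀ k, dotp (A k) g = dotp (B k) g →
      (argmaxSet (A k) g).sup x ≤ (argmaxSet (B k) g).sup x }

/-!
Choose `δ < 0` so small that at `g` every non-maximal term of each `A_k·g`, `B_k·g` lies more than
`-δ` below the maximum, and every strict inequality `A_k·g < B_k·g` has slack more than `-δ`.
Then for `x ∈ [δ, 0]^d` one has `A_k·(g + x) = A_k·g + max_{i ∈ argmax} x_i`, so `g + x ∈ C`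
if and only if `x ∈ T(g, C)`. Extremality of type `t` is local: in a set stable under `⊔` with a
vector `m < h`, it only depends on the box `[m, h]`. Both `C - g` and `T(g, C)` are stable under
`⊔` with the constant `δ`, and they agree on `[δ, 0]^d`.
-/

open Finset Filter Topology

namespace Rmax

lemma add_finsetSup {ι : Type*} (c : Rmax) (s : Finset ι) (f : ι → Rmax) :
    c + s.sup f = s.sup fun i => c + f i :=
  apply_sup_eq_sup_comp (c + ·) (add_max c) (WithBot.add_bot c)

lemma coe_add_inj (r : ℝ) {a b : Rmax} : (r : Rmax) + a = r + b ↔ a = b := by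
  simp only [le_antisymm_iff, WithBot.add_le_add_iff_left (WithBot.coe_ne_bot (a := r))]

end Rmax

section Dotp

variable {d : ℕ}

lemma le_dotp (c x : Fin d → Rmax) (i : Fin d) : c i + x i ≤ dotp c x :=
  le_sup (f := fun j => c j + x j) (mem_univ i)

lemma dotp_mono (c : Fin d → Rmax) {x y : Fin d → Rmax} (h : x ≤ y) : dotp c x ≤ dotp c y :=
  sup_mono_fun fun i _ => by gcongr; exact h i

lemma dotp_sup (c x y : Fin d → Rmax) : dotp c (x ⊔ y) = dotp c x ⊔ dotp c y := by
  rw [dotp, dotp, dotp, ← sup_sup]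
  exact congrArg _ (funext fun i => add_max (c i) (x i) (y i))

lemma dotp_const_add (c x : Fin d → Rmax) (r : Rmax) :
    dotp c (fun i => r + x i) = r + dotp c x := by
  simp only [dotp, Rmax.add_finsetSup, add_left_comm r]

lemma isTropCone_coneOf {n : ℕ} (A B : Fin n → Fin d → Rmax) : IsTropCone (coneOf A B) :=
  ⟨fun x hx y hy k => by rw [dotp_sup, dotp_sup]; exact sup_le_sup (hx k) (hy k),
    fun x hx r k => by rw [dotp_const_add, dotp_const_add]; gcongr; exact hx k⟩

lemma argmaxSet_nonempty [Nonempty (Fin d)] (c g : Fin d → Rmax) : (argmaxSet c g).Nonempty := by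
  obtain ⟨i, -, hi⟩ := exists_mem_eq_sup univ univ_nonempty fun i => c i + g i
  exact ⟨i, mem_filter.2 ⟨mem_univ i, hi.symm⟩⟩

lemma argmaxSet_eq_univ {c g : Fin d → Rmax} (h : dotp c g = ⊥) : argmaxSet c g = univ := by
  refine eq_univ_iff_forall.2 fun i => mem_filter.2 ⟨mem_univ i, ?_⟩
  rw [h]
  exact le_bot_iff.1 (h ▸ le_dotp c g i)

def TermsSeparated (δ : ℝ) (c g : Fin d → Rmax) : Prop :=
  ∀ i, c i + g i = dotp c g ∨ c i + g i ≤ dotp c g + δ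

lemma dotp_add_of_termsSeparated {δ : ℝ} {c g x : Fin d → Rmax} (hc : TermsSeparated δ c g)
    (hx0 : x ≤ 0) (hxδ : ∀ i, (δ : Rmax) ≤ x i) :
    dotp c (fun i => g i + x i) = dotp c g + (argmaxSet c g).sup x := by
  apply le_antisymm
  · refine Finset.sup_le fun i _ => ?_
    rcases hc i with hi | hi
    · rw [← add_assoc, hi]
      gcongr
      exact le_sup (mem_filter.2 ⟨mem_univ i, hi⟩)
    · have : Nonempty (Fin d) := ⟨i⟩
      obtain ⟨j, hj⟩ := argmaxSet_nonempty c g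
      calc c i + (g i + x i) ≤ c i + (g i + 0) := by gcongr; exact hx0 i
        _ ≤ dotp c g + δ := by rwa [add_zero]
        _ ≤ dotp c g + (argmaxSet c g).sup x := by gcongr; exact (hxδ j).trans (le_sup hj)
  · rw [Rmax.add_finsetSup]
    refine Finset.sup_le fun i hi => ?_
    rw [← (mem_filter.1 hi).2, add_assoc]
    exact le_dotp c (fun i => g i + x i) i

end Dotp

section LocalDescription

variable {d n : ℕ} {A B : Fin n → Fin d → Rmax} {g x y : Fin d → Rmax}

lemma sup_mem_tangentCone (hx : x ∈ tangentCone A B g) (hy : y ∈ tangentCone A B g) :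
    x ⊔ y ∈ tangentCone A B g := fun k hk => by
  simp only [Finset.sup_sup]
  exact sup_le_sup (hx k hk) (hy k hk)

lemma const_mem_tangentCone (r : Rmax) : (fun _ => r) ∈ tangentCone A B g := fun k _ => by
  cases isEmpty_or_nonempty (Fin d)
  · rw [eq_empty_of_isEmpty (argmaxSet (A k) g), Finset.sup_empty]
    exact bot_le
  · rw [Finset.sup_const (argmaxSet_nonempty _ _), Finset.sup_const (argmaxSet_nonempty _ _)]

def IsLocalRadius (A B : Fin n → Fin d → Rmax) (g : Fin d → Rmax) (δ : ℝ) : Prop :=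
  (∀ k, TermsSeparated δ (A k) g) ∧ (∀ k, TermsSeparated δ (B k) g) ∧
    ∀ k, dotp (A k) g = dotp (B k) g ∨ dotp (A k) g ≤ dotp (B k) g + δ

lemma add_mem_coneOf_iff {δ : ℝ} (hR : IsLocalRadius A B g δ) (hx0 : x ≤ 0)
    (hxδ : ∀ i, (δ : Rmax) ≤ x i) :
    (fun i => g i + x i) ∈ coneOf A B ↔ x ∈ tangentCone A B g := by
  refine forall_congr' fun k => ?_
  rcases eq_or_ne (dotp (A k) g) (dotp (B k) g) with htight | hslack
  · rw [dotp_add_of_termsSeparated (hR.1 k) hx0 hxδ,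
      dotp_add_of_termsSeparated (hR.2.1 k) hx0 hxδ, htight]
    rcases eq_or_ne (dotp (B k) g) ⊥ with hbot | hbot
    · rw [argmaxSet_eq_univ (htight.trans hbot), argmaxSet_eq_univ hbot]
      exact iff_of_true le_rfl fun _ => le_rfl
    · rw [WithBot.add_le_add_iff_left hbot]
      exact ⟨fun h _ => h, fun h => h rfl⟩
  · refine iff_of_true ?_ fun h => absurd h hslack
    have hle := (hR.2.2 k).resolve_left hslack
    calc dotp (A k) (fun i => g i + x i) ≤ dotp (A k) g :=
          dotp_mono _ fun i => add_le_of_nonpos_right (hx0 i)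
      _ ≤ dotp (B k) g + δ := hle
      _ = dotp (B k) fun i => δ + g i := by rw [dotp_const_add, add_comm]
      _ ≤ dotp (B k) fun i => g i + x i := dotp_mono _ fun i => by rw [add_comm]; gcongr; exact hxδ i

lemma eventually_eq_or_le_add {a b : Rmax} (h : a ≤ b) :
    ∀ᶠ δ : ℝ in 𝓝[<] 0, a = b ∨ a ≤ b + δ := by
  rcases h.eq_or_lt with rfl | hlt
  · exact Eventually.of_forall fun _ => Or.inl rfl
  induction a using WithBot.recBotCoe with
  | bot => exact Eventually.of_forall fun _ => Or.inr bot_le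
  | coe a =>
    obtain ⟨b, rfl⟩ := WithBot.ne_bot_iff_exists.1 (ne_bot_of_gt hlt)
    filter_upwards [Ioo_mem_nhdsLT (sub_neg.2 (WithBot.coe_lt_coe.1 hlt))] with δ hδ
    refine Or.inr ?_
    rw [← WithBot.coe_add, WithBot.coe_le_coe]
    linarith [hδ.1]

lemma exists_isLocalRadius (hg : g ∈ coneOf A B) : ∃ δ < 0, IsLocalRadius A B g δ := by
  have hterms (c : Fin d → Rmax) : ∀ᶠ δ in 𝓝[<] (0 : ℝ), TermsSeparated δ c g :=
    eventually_all.2 fun i => eventually_eq_or_le_add (le_dotp c g i)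
  exact (eventually_mem_nhdsWithin.and ((eventually_all.2 fun k => hterms (A k)).and
    ((eventually_all.2 fun k => hterms (B k)).and
      (eventually_all.2 fun k => eventually_eq_or_le_add (hg k))))).exists

end LocalDescription

section Extremality

variable {ι : Type*} {K L : Set (ι → Rmax)} {m h : ι → Rmax} {t : ι}

lemma extremeType_iff_of_sup_mem (hmh : ∀ i, m i < h i) (hK : ∀ x ∈ K, x ⊔ m ∈ K) :
    ExtremeType K h t ↔ h ∈ K ∧ ∀ x ∈ K ∩ Set.Icc m h, x t = h t → x = h := by
  refine and_congr_right fun _ => ⟨fun H x hx hxt => H x hx.1 hx.2.2 hxt, fun H x hx hxh hxt => ?_⟩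
  have hsup : x ⊔ m = h := by
    refine H _ ⟨hK x hx, le_sup_right, sup_le hxh fun i => (hmh i).le⟩ ?_
    rw [Pi.sup_apply, hxt, sup_eq_left.2 (hmh t).le]
  funext i
  have hi := congrFun hsup i
  rcases le_total (x i) (m i) with hle | hle
  · rw [Pi.sup_apply, sup_eq_right.2 hle] at hi
    exact absurd hi (hmh i).ne
  · rwa [Pi.sup_apply, sup_eq_left.2 hle] at hi

lemma extremeType_congr_of_inter_Icc_eq (hmh : ∀ i, m i < h i) (hK : ∀ x ∈ K, x ⊔ m ∈ K)
    (hL : ∀ x ∈ L, x ⊔ m ∈ L) (hKL : K ∩ Set.Icc m h = L ∩ Set.Icc m h) :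
    ExtremeType K h t ↔ ExtremeType L h t := by
  have hmem (M : Set (ι → Rmax)) : h ∈ M ↔ h ∈ M ∩ Set.Icc m h :=
    ⟨fun hM => ⟨hM, fun i => (hmh i).le, le_rfl⟩, And.left⟩
  rw [extremeType_iff_of_sup_mem hmh hK, extremeType_iff_of_sup_mem hmh hL, hmem K, hmem L, hKL]

namespace Rmax

def translate (g : ι → ℝ) (x : ι → Rmax) : ι → Rmax := fun i => (g i : Rmax) + x i

lemma translate_le_translate_iff {g : ι → ℝ} {x y : ι → Rmax} :
    translate g x ≤ translate g y ↔ x ≤ y :=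
  forall_congr' fun _ => WithBot.add_le_add_iff_left WithBot.coe_ne_bot

lemma translate_injective (g : ι → ℝ) : Function.Injective (translate g) := fun _ _ hxy =>
  funext fun i => (coe_add_inj (g i)).1 (congrFun hxy i)

lemma translate_surjective (g : ι → ℝ) : Function.Surjective (translate g) := fun y =>
  ⟨translate (-g) y, funext fun i => by
    simp only [translate, Pi.neg_apply, ← add_assoc, ← WithBot.coe_add, add_neg_cancel,
      WithBot.coe_zero, zero_add]⟩

lemma translate_sup (g : ι → ℝ) (x y : ι → Rmax) :
    translate g (x ⊔ y) = translate g x ⊔ translate g y :=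
  funext fun i => add_max (g i : Rmax) (x i) (y i)

lemma extremeType_preimage_translate (g : ι → ℝ) :
    ExtremeType (translate g ⁻¹' K) h t ↔ ExtremeType K (translate g h) t := by
  refine and_congr Iff.rfl
    ((forall_congr' fun x => ?_).trans (translate_surjective g).forall.symm)
  simp only [Set.mem_preimage, translate_le_translate_iff, (translate_injective g).eq_iff,
    translate, coe_add_inj]

end Rmax

end Extremality

/-- Prop.: `g` (all coordinates finite) is extreme of type `t` in
`C = {x | A·x ≤ B·x}` iff the all-zeros vector is extreme of type `t`
in the tangent cone `T(g,C)`. -/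
theorem stmt6 {d n : ℕ} (A B : Fin n → Fin d → Rmax) (g' : Fin d → ℝ) (t : Fin d)
    (hg : (fun i => ((g' i : ℝ) : Rmax)) ∈ coneOf A B) :
    ExtremeType (coneOf A B) (fun i => ((g' i : ℝ) : Rmax)) t ↔
      ExtremeType (tangentCone A B (fun i => ((g' i : ℝ) : Rmax)))
        (fun _ => (0 : Rmax)) t := by
  obtain ⟨δ, hδ, hR⟩ := exists_isLocalRadius hg
  have htransport := Rmax.extremeType_preimage_translate g' (K := coneOf A B) (h := 0) (t := t)
  rw [show Rmax.translate g' 0 = fun i => ((g' i : ℝ) : Rmax) from funext fun _ => add_zero _]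
    at htransport
  rw [← htransport]
  refine extremeType_congr_of_inter_Icc_eq (m := fun _ => (δ : Rmax))
    (fun _ => WithBot.coe_lt_coe.2 hδ) (fun x hx => ?_)
    (fun x hx => sup_mem_tangentCone hx (const_mem_tangentCone _)) ?_
  · rw [Set.mem_preimage, Rmax.translate_sup]
    refine (isTropCone_coneOf A B).1 _ hx _ ?_
    show (fun i => (g' i : Rmax) + δ) ∈ coneOf A B
    simpa only [add_comm] using (isTropCone_coneOf A B).2 _ hg δ
  · ext x
    exact and_congr_left fun hx => add_mem_coneOf_iff hR hx.2 hx.1
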